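/- arXiv:math/0407230 — 2 statements merged into one kernel-verified Lean document; each statement's English description precedes it below -/
import Mathlib

section
/- For every 0 ≤ q ≤ n and every ω ∈ K^{−q}, one has d_K(P ω) + P(d_K ω) = ω − res(ω), where res = 0 on K^{−q} for q ≥ 1 and res(f)(z, ζ) = f(ζ, ζ) for f ∈ K^0. In particular, for every f ∈ K^0, d_K(P f)(z, ζ) = f(z, ζ) − f(ζ, ζ) for all (z, ζ) ∈ U × U. -/
/-!
Setting: `n ≥ 1`, `U ⊆ ℂⁿ` a nonempty convex open set.  Points of `U × U` are
written `p = (z, ζ)` with `z = p.1`, `ζ = p.2`.  For `0 ≤ q ≤ n`,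
`K^{-q} = Λ^q(ℂⁿ) ⊗ O(U×U)` is encoded by the coefficients of its elements on
the basis `e^I`, where the strictly increasing multi-indices
`I = (i₁ < … < i_q)` are encoded as finsets `I ⊆ Fin n` of cardinality `q`.
-/

open scoped BigOperators

namespace TwistedKoszul

variable (n : ℕ)

/-- Points of `ℂⁿ × ℂⁿ`. -/
abbrev Pt (n : ℕ) := (Fin n → ℂ) × (Fin n → ℂ)

/-- A family of coefficients, indexed by the basis vectors `e^I` of the
exterior algebra `Λ^•(ℂⁿ)` (strictly increasing multi-indices `I`, encoded as
finsets).  An element of `K^{-q}` is such a family supported on finsets of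
cardinality `q`, with holomorphic coefficients (see `MemK`). -/
abbrev Coeff (n : ℕ) := Finset (Fin n) → Pt n → ℂ

/-- The sign `(-1)^{#{i ∈ I | i < j}}`, so that `e^j ∧ e^I = sgn j I • e^{I ∪ {j}}`
for `j ∉ I`. -/
noncomputable def sgn (j : Fin n) (I : Finset (Fin n)) : ℂ :=
  (-1 : ℂ) ^ (I.filter (fun i => i < j)).card

/-- The holomorphic partial derivative `∂f/∂z^j` in the `j`-th coordinate of
the first factor. -/
noncomputable def pd (j : Fin n) (f : Pt n → ℂ) (p : Pt n) : ℂ :=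
  fderiv ℂ f p (Pi.single j 1, 0)

/-- The Koszul differential `d_K : K^{-q} → K^{-q+1}`: contraction with
`Σ_i (z^i - ζ^i) ě^i`, i.e. `d_K(f e^I) = Σ_r (-1)^{r-1} (z^{i_r} - ζ^{i_r}) f e^{I_r}`. -/
noncomputable def dK (ω : Coeff n) : Coeff n := fun J p =>
  ∑ j ∈ Jᶜ, sgn n j J * ((p.1 j - p.2 j) * ω (insert j J) p)

/-- The homotopy operator `P : K^{-q} → K^{-q-1}`:
`P(f e^I) = Σ_j (∫₀¹ t^{|I|} (∂f/∂z^j)(ζ + t(z - ζ), ζ) dt) e^j ∧ e^I`. -/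
noncomputable def P (ω : Coeff n) : Coeff n := fun J p =>
  ∑ j ∈ J, sgn n j (J.erase j) *
    ∫ t in (0:ℝ)..1, (t : ℂ) ^ (J.card - 1) *
      pd n j (ω (J.erase j)) (p.2 + t • (p.1 - p.2), p.2)

/-- The operator `res`: zero on `K^{-q}` for `q ≥ 1`, and
`res(f)(z, ζ) = f(ζ, ζ)` for `f ∈ K^0`. -/
noncomputable def res (ω : Coeff n) : Coeff n := fun J p =>
  if J = ∅ then ω ∅ (p.2, p.2) else 0

/-- The element of `K^0 = O(U×U)` determined by a single function. -/
noncomputable def ofFun (f : Pt n → ℂ) : Coeff n := fun J p => if J = ∅ then f p else 0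

/-- `ω` is an element of `K^{-q}` over `U × U`: it is supported on
multi-indices of length `q` and its coefficients are holomorphic on `U × U`. -/
noncomputable def MemK (U : Set (Fin n → ℂ)) (q : ℕ) (ω : Coeff n) : Prop :=
  (∀ I : Finset (Fin n), I.card ≠ q → ω I = 0) ∧
  ∀ I : Finset (Fin n), DifferentiableOn ℂ (ω I) (U ×ˢ U)

end TwistedKoszul
namespace TwistedKoszul

variable {n : ℕ}

lemma sgn_sq (j : Fin n) (I : Finset (Fin n)) : sgn n j I * sgn n j I = 1 := by
  rw [sgn, ← pow_add, ← two_mul, pow_mul]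
  norm_num

lemma sgn_insert {a j : Fin n} {I : Finset (Fin n)} (ha : a ∉ I) (hne : a ≠ j) :
    sgn n j (insert a I) = (if a < j then -1 else 1) * sgn n j I := by
  rw [sgn, sgn, Finset.filter_insert]
  split_ifs with h
  · rw [Finset.card_insert_of_notMem (fun hc => ha (Finset.mem_of_mem_filter a hc)), pow_succ,
      mul_comm]
  · rw [one_mul]

lemma sgn_swap {a b : Fin n} {A : Finset (Fin n)} (hab : a ≠ b) (ha : a ∉ A) (hb : b ∉ A) :
    sgn n b (insert a A) * sgn n a (insert b A) = -(sgn n a (A) * sgn n b A) := by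
  rw [sgn_insert ha hab, sgn_insert hb hab.symm]
  rcases lt_or_gt_of_ne hab with h | h
  · rw [if_pos h, if_neg (asymm h)]; ring
  · rw [if_neg (asymm h), if_pos h]; ring

end TwistedKoszul
namespace TwistedKoszul

open Metric

lemma pd_bound {n : ℕ} {f : Pt n → ℂ} {V : Set (Pt n)} (hV : IsOpen V)
    (hf : DifferentiableOn ℂ f V) {K : Set (Pt n)} (hK : IsCompact K) (hKV : K ⊆ V)
    (j : Fin n) : ∃ C : ℝ, ∀ x ∈ K, ‖pd n j f x‖ ≤ C := by
  obtain ⟨δ, δpos, hδ⟩ := hK.exists_thickening_subset_open hV hKV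
  set L := Metric.cthickening (δ/2) K with hLdef
  have hLV : L ⊆ V := (Metric.cthickening_subset_thickening' δpos (half_lt_self δpos) K).trans hδ
  have hLc : IsCompact L := hK.cthickening
  obtain ⟨C, hC⟩ := hLc.exists_bound_of_continuousOn ((hf.continuousOn).mono hLV)
  refine ⟨C / (δ/2), fun x hx => ?_⟩
  set e : Pt n := (Pi.single j 1, 0) with hedef
  have he : ‖e‖ ≤ 1 := by
    rw [Prod.norm_def]
    refine max_le ?_ (by simp [hedef])
    refine (pi_norm_le_iff_of_nonneg zero_le_one).2 fun i => ?_
    rcases eq_or_ne i j with rfl | hij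
    · simp [hedef]
    · simp [hedef, Pi.single_eq_of_ne hij]
  have hmem : ∀ w : ℂ, ‖w‖ ≤ δ/2 → x + w • e ∈ L := by
    intro w hw
    apply Metric.closedBall_subset_cthickening hx (δ/2)
    rw [Metric.mem_closedBall, dist_eq_norm, add_sub_cancel_left]
    calc ‖w • e‖ = ‖w‖ * ‖e‖ := norm_smul w e
      _ ≤ (δ/2) * 1 := mul_le_mul hw he (norm_nonneg e) (by positivity)
      _ = δ/2 := mul_one _
  set F : ℂ → ℂ := fun w => f (x + w • e) with hFdef
  have hFd : DifferentiableOn ℂ F (Metric.closedBall 0 (δ/2)) := by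
    refine hf.comp ((differentiable_id.smul_const e).const_add x).differentiableOn ?_
    intro w hw
    exact hLV (hmem w (by simpa using hw))
  have hF : DiffContOnCl ℂ F (Metric.ball 0 (δ/2)) :=
    (hFd.mono Metric.closure_ball_subset_closedBall).diffContOnCl
  have hsphere : ∀ w ∈ Metric.sphere (0:ℂ) (δ/2), ‖F w‖ ≤ C := fun w hw =>
    hC _ (hmem w (by rw [mem_sphere_iff_norm, sub_zero] at hw; exact hw.le))
  have key := Complex.norm_deriv_le_of_forall_mem_sphere_norm_le (by positivity) hF hsphere
  have hx' : DifferentiableAt ℂ f x := hf.differentiableAt (hV.mem_nhds (hKV hx))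
  have h1 : HasDerivAt (fun w : ℂ => x + w • e) e 0 := by
    simpa using ((hasDerivAt_id (0:ℂ)).smul_const e).const_add x
  have hf0 : HasFDerivAt f (fderiv ℂ f x) ((fun w : ℂ => x + w • e) 0) := by
    simpa using hx'.hasFDerivAt
  have hFderiv : HasDerivAt F (fderiv ℂ f x e) 0 := hf0.comp_hasDerivAt 0 h1
  calc ‖pd n j f x‖ = ‖deriv F 0‖ := by rw [hFderiv.deriv]; rfl
    _ ≤ C / (δ/2) := key

end TwistedKoszul
namespace TwistedKoszul

open MeasureTheory

lemma intervalIntegrable_pd {n : ℕ} {f : Pt n → ℂ} {V : Set (Pt n)} (hV : IsOpen V)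
    (hf : DifferentiableOn ℂ f V) {γ : ℝ → Pt n} (hγ : Continuous γ)
    (hmaps : ∀ t ∈ Set.uIcc (0:ℝ) 1, γ t ∈ V) (j : Fin n) (m : ℕ) :
    IntervalIntegrable (fun t : ℝ => (t:ℂ)^m * pd n j f (γ t)) volume 0 1 := by
  have hK : IsCompact (γ '' Set.uIcc (0:ℝ) 1) := (isCompact_uIcc).image hγ
  have hKV : γ '' Set.uIcc (0:ℝ) 1 ⊆ V := by
    rintro _ ⟨t, ht, rfl⟩; exact hmaps t ht
  obtain ⟨C, hC⟩ := pd_bound hV hf hK hKV j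
  rw [intervalIntegrable_iff, Set.uIoc_of_le (zero_le_one)]
  apply Measure.integrableOn_of_bounded (M := max C 0) measure_Ioc_lt_top.ne
  · apply Measurable.aestronglyMeasurable
    exact ((Complex.measurable_ofReal.comp measurable_id).pow_const m).mul
      ((measurable_fderiv_apply_const ℂ f ((Pi.single j 1 : Fin n → ℂ), 0)).comp hγ.measurable)
  · rw [ae_restrict_iff' measurableSet_Ioc]
    filter_upwards with t ht
    have ht' : t ∈ Set.uIcc (0:ℝ) 1 := by
      rw [Set.uIcc_of_le zero_le_one]; exact ⟨ht.1.le, ht.2⟩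
    have h1 : ‖((t:ℝ):ℂ)^m‖ ≤ 1 := by
      rw [norm_pow]
      apply pow_le_one₀ (norm_nonneg _)
      rw [Complex.norm_real, Real.norm_eq_abs, abs_of_nonneg ht.1.le]
      exact ht.2
    calc ‖((t:ℝ):ℂ)^m * pd n j f (γ t)‖ = ‖((t:ℝ):ℂ)^m‖ * ‖pd n j f (γ t)‖ := norm_mul _ _
      _ ≤ 1 * max C 0 := by
          apply mul_le_mul h1 ((hC _ ⟨t, ht', rfl⟩).trans (le_max_left _ _)) (norm_nonneg _)
            zero_le_one
      _ = max C 0 := one_mul _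

end TwistedKoszul
namespace TwistedKoszul

lemma pd_sum {n : ℕ} (j : Fin n) {α : Type*} {s : Finset α} {F : α → Pt n → ℂ} {x : Pt n}
    (h : ∀ a ∈ s, DifferentiableAt ℂ (F a) x) :
    pd n j (fun y => ∑ a ∈ s, F a y) x = ∑ a ∈ s, pd n j (F a) x := by
  unfold pd
  rw [fderiv_fun_sum h]
  simp [ContinuousLinearMap.sum_apply]

lemma pd_const_mul {n : ℕ} (j : Fin n) (c : ℂ) {g : Pt n → ℂ} {x : Pt n}
    (hg : DifferentiableAt ℂ g x) :
    pd n j (fun y => c * g y) x = c * pd n j g x := by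
  unfold pd
  rw [fderiv_const_mul hg]
  simp

/-- The coordinate-difference function as a continuous linear map. -/
noncomputable def coordCLM (n : ℕ) (k : Fin n) : Pt n →L[ℂ] ℂ :=
  (ContinuousLinearMap.proj k).comp (ContinuousLinearMap.fst ℂ (Fin n → ℂ) (Fin n → ℂ)) -
    (ContinuousLinearMap.proj k).comp (ContinuousLinearMap.snd ℂ (Fin n → ℂ) (Fin n → ℂ))

lemma coordCLM_apply {n : ℕ} (k : Fin n) (x : Pt n) : coordCLM n k x = x.1 k - x.2 k := rfl

lemma pd_mul {n : ℕ} (j k : Fin n) {g : Pt n → ℂ} {x : Pt n}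
    (hg : DifferentiableAt ℂ g x) :
    pd n j (fun y => (y.1 k - y.2 k) * g y) x
      = (if k = j then 1 else 0) * g x + (x.1 k - x.2 k) * pd n j g x := by
  unfold pd
  have hl : DifferentiableAt ℂ (fun y : Pt n => y.1 k - y.2 k) x :=
    ((coordCLM n k).differentiable.differentiableAt)
  have : (fun y : Pt n => y.1 k - y.2 k) = coordCLM n k := rfl
  rw [fderiv_fun_mul hl hg]
  simp only [ContinuousLinearMap.add_apply, ContinuousLinearMap.smul_apply, smul_eq_mul]
  rw [this, ContinuousLinearMap.fderiv]
  have : coordCLM n k ((Pi.single j 1 : Fin n → ℂ), (0 : Fin n → ℂ))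
      = (if k = j then 1 else 0) := by
    rw [coordCLM_apply]
    simp [Pi.single_apply]
  rw [this]
  ring

lemma fderiv_dir {n : ℕ} {g : Pt n → ℂ} {x : Pt n} (hg : DifferentiableAt ℂ g x)
    (v : Fin n → ℂ) :
    fderiv ℂ g x (v, (0 : Fin n → ℂ)) = ∑ j, v j * pd n j g x := by
  have hv : ((v, (0 : Fin n → ℂ)) : Pt n)
      = ∑ j, v j • (((Pi.single j 1 : Fin n → ℂ), (0 : Fin n → ℂ)) : Pt n) := by
    refine Prod.ext ?_ (by rw [Prod.snd_sum]; simp)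
    rw [Prod.fst_sum]
    funext i
    simp only [Prod.smul_fst, Finset.sum_apply, Pi.smul_apply, Pi.single_apply, smul_eq_mul,
      mul_ite, mul_one, mul_zero]
    simp
  rw [hv, map_sum]
  simp only [map_smul, smul_eq_mul]
  rfl

lemma key_hasDerivAt {n : ℕ} {g : Pt n → ℂ} {p : Pt n} {t : ℝ}
    (hg : DifferentiableAt ℂ g (p.2 + t • (p.1 - p.2), p.2)) (m : ℕ) :
    HasDerivAt (fun s : ℝ => ((s:ℂ))^m * g (p.2 + s • (p.1 - p.2), p.2))
      ((m:ℂ) * (t:ℂ)^(m-1) * g (p.2 + t • (p.1 - p.2), p.2)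
        + (t:ℂ)^m * ∑ j, (p.1 j - p.2 j) * pd n j g (p.2 + t • (p.1 - p.2), p.2)) t := by
  have h1 : HasDerivAt (fun s : ℝ => ((s:ℂ))^m) ((m:ℂ) * (t:ℂ)^(m-1)) t :=
    (hasDerivAt_pow m ((t:ℝ):ℂ)).comp_ofReal
  have hγ1 : HasDerivAt (fun s : ℝ => p.2 + s • (p.1 - p.2)) (p.1 - p.2) t := by
    simpa using ((hasDerivAt_id t).smul_const (p.1 - p.2)).const_add p.2
  have hγd : HasDerivAt (fun s : ℝ => ((p.2 + s • (p.1 - p.2), p.2) : Pt n))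
      (((p.1 - p.2 : Fin n → ℂ), (0 : Fin n → ℂ)) : Pt n) t :=
    hγ1.prodMk (hasDerivAt_const t p.2)
  have hgR : DifferentiableAt ℝ g (p.2 + t • (p.1 - p.2), p.2) := hg.restrictScalars ℝ
  have h2 : HasDerivAt (fun s : ℝ => g (p.2 + s • (p.1 - p.2), p.2))
      (∑ j, (p.1 j - p.2 j) * pd n j g (p.2 + t • (p.1 - p.2), p.2)) t := by
    have hc := (hgR.hasFDerivAt).comp_hasDerivAt t hγd
    have he : fderiv ℝ g (p.2 + t • (p.1 - p.2), p.2) ((p.1 - p.2, 0) : Pt n)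
        = ∑ j, (p.1 j - p.2 j) * pd n j g (p.2 + t • (p.1 - p.2), p.2) := by
      rw [hg.fderiv_restrictScalars ℝ, ContinuousLinearMap.coe_restrictScalars']
      rw [fderiv_dir hg]
      simp [Pi.sub_apply]
    rw [he] at hc
    exact hc
  simpa using h1.fun_mul h2

end TwistedKoszul
namespace TwistedKoszul

lemma alg1 {s c A : ℂ} (h : s * s = 1) : s * (c * (s * A)) = c * A := by
  linear_combination c * A * h

lemma alg2 {s A : ℂ} (h : s * s = 1) : s * (s * A) = A := by linear_combination A * h

lemma alg3 {x y c I : ℂ} (h : x = -y) : x * c * I + y * c * I = 0 := by rw [h]; ring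

lemma alg5 {T1 t Tm s c W D : ℂ} (h : T1 * t = Tm) :
    T1 * (s * (1 * W + t * c * D)) = s * (T1 * W + c * (Tm * D)) := by
  linear_combination s * c * D * h

lemma alg6 {T1 t Tm s c W D : ℂ} (h : T1 * t = Tm) :
    T1 * (s * (0 * W + t * c * D)) = s * c * (Tm * D) := by
  linear_combination s * c * D * h

lemma diff_coord {n : ℕ} (k : Fin n) : Differentiable ℂ (fun y : Pt n => y.1 k - y.2 k) := by
  have h : (fun y : Pt n => y.1 k - y.2 k) = coordCLM n k := rfl
  rw [h]; exact (coordCLM n k).differentiable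

end TwistedKoszul
namespace TwistedKoszul
lemma intervalIntegrable_sum' {ι : Type*} (s : Finset ι) {f : ι → ℝ → ℂ}
    {μ : MeasureTheory.Measure ℝ} {a b : ℝ}
    (h : ∀ i ∈ s, IntervalIntegrable (f i) μ a b) :
    IntervalIntegrable (fun t => ∑ i ∈ s, f i t) μ a b := by
  have he : (fun t => ∑ i ∈ s, f i t) = ∑ i ∈ s, f i := by
    funext t; rw [Finset.sum_apply]
  rw [he]; exact IntervalIntegrable.sum s h
end TwistedKoszul
namespace TwistedKoszul

open MeasureTheory intervalIntegral

set_option maxHeartbeats 2000000 in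
lemma key {n : ℕ} {U : Set (Fin n → ℂ)} (hUopen : IsOpen U) (hUconv : Convex ℝ U)
    (ω : Coeff n) (hd : ∀ I, DifferentiableOn ℂ (ω I) (U ×ˢ U))
    (J : Finset (Fin n)) (p : Pt n) (hp : p ∈ U ×ˢ U) :
    dK n (P n ω) J p + P n (dK n ω) J p = ω J p - res n ω J p := by
  obtain ⟨hz, hζ⟩ := hp
  have hVo : IsOpen (U ×ˢ U) := hUopen.prod hUopen
  have hγc : Continuous (fun t : ℝ => ((p.2 + t • (p.1 - p.2), p.2) : Pt n)) :=
    (continuous_const.add (continuous_id.smul continuous_const)).prodMk continuous_const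
  have hγm : ∀ t ∈ Set.uIcc (0:ℝ) 1, ((p.2 + t • (p.1 - p.2), p.2) : Pt n) ∈ U ×ˢ U := by
    intro t ht
    rw [Set.uIcc_of_le zero_le_one] at ht
    refine ⟨?_, hζ⟩
    have h1 : p.2 + t • (p.1 - p.2) = (1 - t) • p.2 + t • p.1 := by
      rw [sub_smul, one_smul, smul_sub]; abel
    rw [h1]; exact hUconv hζ hz (by linarith [ht.2]) ht.1 (by ring)
  have hdAt : ∀ (I : Finset (Fin n)) (t : ℝ), t ∈ Set.uIcc (0:ℝ) 1 →
      DifferentiableAt ℂ (ω I) ((p.2 + t • (p.1 - p.2), p.2) : Pt n) :=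
    fun I t ht => (hd I).differentiableAt (hVo.mem_nhds (hγm t ht))
  have int1 : ∀ (I : Finset (Fin n)) (j : Fin n) (m' : ℕ),
      IntervalIntegrable
        (fun t : ℝ => (t:ℂ)^m' * pd n j (ω I) ((p.2 + t • (p.1 - p.2), p.2) : Pt n))
        volume 0 1 :=
    fun I j m' => intervalIntegrable_pd hVo (hd I) hγc hγm j m'
  have int2 : ∀ (I : Finset (Fin n)) (m' : ℕ),
      IntervalIntegrable
        (fun t : ℝ => (t:ℂ)^m' * ω I ((p.2 + t • (p.1 - p.2), p.2) : Pt n)) volume 0 1 := by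
    intro I m'
    apply ContinuousOn.intervalIntegrable
    exact (Complex.continuous_ofReal.pow m').continuousOn.mul
      ((hd I).continuousOn.comp hγc.continuousOn hγm)
  have E1 : dK n (P n ω) J p
      = (∑ j ∈ Jᶜ, (p.1 j - p.2 j) *
            ∫ t in (0:ℝ)..1, (t:ℂ)^J.card * pd n j (ω J) (p.2 + t • (p.1 - p.2), p.2))
        + ∑ j ∈ Jᶜ, ∑ k ∈ J,
            ((sgn n j J * sgn n k (insert j (J.erase k))) * (p.1 j - p.2 j)) *
              ∫ t in (0:ℝ)..1,
                (t:ℂ)^J.card * pd n k (ω (insert j (J.erase k))) (p.2 + t • (p.1 - p.2), p.2) := by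
    simp only [dK, P]
    rw [← Finset.sum_add_distrib]
    refine Finset.sum_congr rfl fun j hj => ?_
    have hjJ : j ∉ J := by simpa using hj
    rw [Finset.sum_insert hjJ, Finset.erase_insert hjJ, Finset.card_insert_of_notMem hjJ,
      Nat.add_sub_cancel]
    have hinner : ∑ k ∈ J, sgn n k ((insert j J).erase k) *
          ∫ t in (0:ℝ)..1,
            (t:ℂ)^J.card * pd n k (ω ((insert j J).erase k)) (p.2 + t • (p.1 - p.2), p.2)
        = ∑ k ∈ J, sgn n k (insert j (J.erase k)) *
          ∫ t in (0:ℝ)..1,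
            (t:ℂ)^J.card * pd n k (ω (insert j (J.erase k))) (p.2 + t • (p.1 - p.2), p.2) := by
      refine Finset.sum_congr rfl fun k hk => ?_
      rw [Finset.erase_insert_of_ne (show j ≠ k from fun h => hjJ (by rw [h]; exact hk))]
    rw [hinner, mul_add, mul_add]
    congr 1
    · exact alg1 (sgn_sq j J)
    · rw [Finset.mul_sum, Finset.mul_sum]
      exact Finset.sum_congr rfl fun k hk => by ring
  have E2 : P n (dK n ω) J p
      = (∑ j ∈ J, ((∫ t in (0:ℝ)..1, (t:ℂ)^(J.card - 1) * ω J (p.2 + t • (p.1 - p.2), p.2))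
            + (p.1 j - p.2 j) *
              ∫ t in (0:ℝ)..1, (t:ℂ)^J.card * pd n j (ω J) (p.2 + t • (p.1 - p.2), p.2)))
        + ∑ j ∈ J, ∑ k ∈ Jᶜ,
            ((sgn n j (J.erase j) * sgn n k (J.erase j)) * (p.1 k - p.2 k)) *
              ∫ t in (0:ℝ)..1,
                (t:ℂ)^J.card * pd n j (ω (insert k (J.erase j))) (p.2 + t • (p.1 - p.2), p.2) := by
    simp only [P]
    rw [← Finset.sum_add_distrib]
    refine Finset.sum_congr rfl fun j hj => ?_
    have hjcard : J.card ≠ 0 := Finset.card_ne_zero_of_mem hj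
    have hpt : Set.EqOn
        (fun t : ℝ => (t:ℂ)^(J.card-1) * pd n j (dK n ω (J.erase j)) (p.2 + t • (p.1 - p.2), p.2))
        (fun t : ℝ => sgn n j (J.erase j) *
            ((t:ℂ)^(J.card-1) * ω J (p.2 + t • (p.1 - p.2), p.2)
              + (p.1 j - p.2 j) *
                ((t:ℂ)^J.card * pd n j (ω J) (p.2 + t • (p.1 - p.2), p.2)))
          + ∑ k ∈ Jᶜ, sgn n k (J.erase j) * (p.1 k - p.2 k) *
              ((t:ℂ)^J.card * pd n j (ω (insert k (J.erase j))) (p.2 + t • (p.1 - p.2), p.2)))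
        (Set.uIcc 0 1) := by
      intro t ht
      have hpd : pd n j (dK n ω (J.erase j)) ((p.2 + t • (p.1 - p.2), p.2) : Pt n)
          = ∑ k ∈ (J.erase j)ᶜ, sgn n k (J.erase j) *
              ((if k = j then 1 else 0) *
                  ω (insert k (J.erase j)) ((p.2 + t • (p.1 - p.2), p.2) : Pt n)
                + (((p.2 + t • (p.1 - p.2), p.2) : Pt n).1 k
                    - ((p.2 + t • (p.1 - p.2), p.2) : Pt n).2 k) *
                  pd n j (ω (insert k (J.erase j))) ((p.2 + t • (p.1 - p.2), p.2) : Pt n)) := by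
        have h0 : pd n j (dK n ω (J.erase j)) ((p.2 + t • (p.1 - p.2), p.2) : Pt n)
            = pd n j (fun x => ∑ k ∈ (J.erase j)ᶜ, sgn n k (J.erase j) *
                ((x.1 k - x.2 k) * ω (insert k (J.erase j)) x))
              ((p.2 + t • (p.1 - p.2), p.2) : Pt n) := rfl
        rw [h0, pd_sum j (fun k _ =>
          (((diff_coord k).differentiableAt.fun_mul (hdAt _ t ht)).const_mul _))]
        exact Finset.sum_congr rfl fun k _ => by
          rw [pd_const_mul j _ ((diff_coord k).differentiableAt.fun_mul (hdAt _ t ht)),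
            pd_mul j k (hdAt _ t ht)]
      have hcoord : ∀ k : Fin n,
          (((p.2 + t • (p.1 - p.2), p.2) : Pt n).1 k
              - ((p.2 + t • (p.1 - p.2), p.2) : Pt n).2 k)
            = (t:ℂ) * (p.1 k - p.2 k) := by
        intro k
        simp only [Pi.add_apply, Pi.smul_apply, Pi.sub_apply, Complex.real_smul]
        ring
      have hpow : (t:ℂ)^(J.card-1) * (t:ℂ) = (t:ℂ)^J.card := pow_sub_one_mul hjcard _
      simp only []
      rw [hpd, Finset.compl_erase, Finset.sum_insert (Finset.notMem_compl.2 hj),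
        Finset.insert_erase hj, hcoord j, mul_add, Finset.mul_sum]
      congr 1
      · rw [if_pos rfl]
        exact alg5 hpow
      · refine Finset.sum_congr rfl fun k hk => ?_
        rw [hcoord k, if_neg (show ¬ k = j from fun h => (Finset.mem_compl.1 hk) (by rw [h]; exact hj))]
        exact alg6 hpow
    rw [intervalIntegral.integral_congr hpt,
      intervalIntegral.integral_add
        (((int2 J (J.card-1)).add ((int1 J j J.card).const_mul _)).const_mul _)
        (intervalIntegrable_sum' Jᶜ (fun k _ => (int1 (insert k (J.erase j)) j J.card).const_mul _)),
      intervalIntegral.integral_finset_sum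
        (fun (k : Fin n) _ => (int1 (insert k (J.erase j)) j J.card).const_mul
          (sgn n k (J.erase j) * (p.1 k - p.2 k))),
      intervalIntegral.integral_const_mul,
      intervalIntegral.integral_add (int2 J (J.card-1)) ((int1 J j J.card).const_mul _),
      intervalIntegral.integral_const_mul, mul_add]
    congr 1
    · exact alg2 (sgn_sq j (J.erase j))
    · rw [Finset.mul_sum]
      refine Finset.sum_congr rfl fun k hk => ?_
      rw [intervalIntegral.integral_const_mul]
      ring
  have hcancel :
      (∑ j ∈ Jᶜ, ∑ k ∈ J,
          ((sgn n j J * sgn n k (insert j (J.erase k))) * (p.1 j - p.2 j)) *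
            ∫ t in (0:ℝ)..1,
              (t:ℂ)^J.card * pd n k (ω (insert j (J.erase k))) (p.2 + t • (p.1 - p.2), p.2))
      + (∑ j ∈ J, ∑ k ∈ Jᶜ,
          ((sgn n j (J.erase j) * sgn n k (J.erase j)) * (p.1 k - p.2 k)) *
            ∫ t in (0:ℝ)..1,
              (t:ℂ)^J.card * pd n j (ω (insert k (J.erase j))) (p.2 + t • (p.1 - p.2), p.2)) = 0 := by
    rw [Finset.sum_comm, ← Finset.sum_add_distrib]
    refine Finset.sum_eq_zero fun a ha => ?_
    rw [← Finset.sum_add_distrib]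
    refine Finset.sum_eq_zero fun b hb => ?_
    have hab : a ≠ b := fun h => (Finset.mem_compl.1 hb) (h ▸ ha)
    have hbe : b ∉ J.erase a := fun h => (Finset.mem_compl.1 hb) (Finset.mem_of_mem_erase h)
    have hs := sgn_swap hab (Finset.notMem_erase a J) hbe
    rw [Finset.insert_erase ha] at hs
    exact alg3 hs
  have final :
      (∑ j ∈ Jᶜ, (p.1 j - p.2 j) *
          ∫ t in (0:ℝ)..1, (t:ℂ)^J.card * pd n j (ω J) (p.2 + t • (p.1 - p.2), p.2))
      + (∑ j ∈ J, ((∫ t in (0:ℝ)..1, (t:ℂ)^(J.card - 1) * ω J (p.2 + t • (p.1 - p.2), p.2))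
            + (p.1 j - p.2 j) *
              ∫ t in (0:ℝ)..1, (t:ℂ)^J.card * pd n j (ω J) (p.2 + t • (p.1 - p.2), p.2)))
      = ω J p - res n ω J p := by
    have hfun : (fun t : ℝ => (↑J.card:ℂ) * (t:ℂ)^(J.card-1) * ω J (p.2 + t • (p.1 - p.2), p.2)
          + (t:ℂ)^J.card * ∑ j, (p.1 j - p.2 j) * pd n j (ω J) (p.2 + t • (p.1 - p.2), p.2))
        = (fun t : ℝ => (↑J.card:ℂ) * ((t:ℂ)^(J.card-1) * ω J (p.2 + t • (p.1 - p.2), p.2))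
          + ∑ j, (p.1 j - p.2 j) *
              ((t:ℂ)^J.card * pd n j (ω J) (p.2 + t • (p.1 - p.2), p.2))) := by
      funext t
      rw [Finset.mul_sum]
      congr 1
      · ring
      · exact Finset.sum_congr rfl fun j _ => by ring
    have hint : IntervalIntegrable
        (fun t : ℝ => (↑J.card:ℂ) * (t:ℂ)^(J.card-1) * ω J (p.2 + t • (p.1 - p.2), p.2)
          + (t:ℂ)^J.card * ∑ j, (p.1 j - p.2 j) * pd n j (ω J) (p.2 + t • (p.1 - p.2), p.2))
        volume 0 1 := by
      rw [hfun]
      exact ((int2 J (J.card-1)).const_mul _).add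
        (intervalIntegrable_sum' Finset.univ (fun j _ => (int1 J j J.card).const_mul _))
    have ftc := intervalIntegral.integral_eq_sub_of_hasDerivAt (a := (0:ℝ)) (b := 1)
      (f := fun t : ℝ => (t:ℂ)^J.card * ω J (p.2 + t • (p.1 - p.2), p.2))
      (f' := fun t : ℝ => (↑J.card:ℂ) * (t:ℂ)^(J.card-1) * ω J (p.2 + t • (p.1 - p.2), p.2)
          + (t:ℂ)^J.card * ∑ j, (p.1 j - p.2 j) * pd n j (ω J) (p.2 + t • (p.1 - p.2), p.2))
      (fun t ht => key_hasDerivAt (hdAt J t ht) J.card) hint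
    rw [hfun] at ftc
    rw [intervalIntegral.integral_add ((int2 J (J.card-1)).const_mul _)
        (intervalIntegrable_sum' Finset.univ (fun j _ => (int1 J j J.card).const_mul _)),
      intervalIntegral.integral_const_mul,
      intervalIntegral.integral_finset_sum
        (fun (j : Fin n) _ => (int1 J j J.card).const_mul (p.1 j - p.2 j))] at ftc
    simp only [intervalIntegral.integral_const_mul] at ftc
    have hS : (∑ j ∈ Jᶜ, (p.1 j - p.2 j) *
          ∫ t in (0:ℝ)..1, (t:ℂ)^J.card * pd n j (ω J) (p.2 + t • (p.1 - p.2), p.2))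
      + (∑ j ∈ J, ((∫ t in (0:ℝ)..1, (t:ℂ)^(J.card - 1) * ω J (p.2 + t • (p.1 - p.2), p.2))
            + (p.1 j - p.2 j) *
              ∫ t in (0:ℝ)..1, (t:ℂ)^J.card * pd n j (ω J) (p.2 + t • (p.1 - p.2), p.2)))
        = (↑J.card:ℂ) *
            (∫ t in (0:ℝ)..1, (t:ℂ)^(J.card - 1) * ω J (p.2 + t • (p.1 - p.2), p.2))
          + ∑ j, (p.1 j - p.2 j) *
              ∫ t in (0:ℝ)..1, (t:ℂ)^J.card * pd n j (ω J) (p.2 + t • (p.1 - p.2), p.2) := by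
      rw [Finset.sum_add_distrib, Finset.sum_const, nsmul_eq_mul,
        ← Finset.sum_add_sum_compl J (fun j => (p.1 j - p.2 j) *
          ∫ t in (0:ℝ)..1, (t:ℂ)^J.card * pd n j (ω J) (p.2 + t • (p.1 - p.2), p.2))]
      ring
    rw [hS, ftc]
    have h1p : p.2 + (1:ℝ) • (p.1 - p.2) = p.1 := by rw [one_smul]; abel
    have h0p : p.2 + (0:ℝ) • (p.1 - p.2) = p.2 := by rw [zero_smul, add_zero]
    rw [h1p, h0p]
    simp only [Complex.ofReal_one, one_pow, Complex.ofReal_zero, one_mul, Prod.mk.eta]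
    rcases eq_or_ne J ∅ with rfl | hJ
    · simp [res]
    · rw [zero_pow (fun h => hJ (Finset.card_eq_zero.1 h))]
      simp [res, hJ]
  rw [E1, E2]
  calc _ = ((∑ j ∈ Jᶜ, (p.1 j - p.2 j) *
          ∫ t in (0:ℝ)..1, (t:ℂ)^J.card * pd n j (ω J) (p.2 + t • (p.1 - p.2), p.2))
      + (∑ j ∈ J, ((∫ t in (0:ℝ)..1, (t:ℂ)^(J.card - 1) * ω J (p.2 + t • (p.1 - p.2), p.2))
            + (p.1 j - p.2 j) *
              ∫ t in (0:ℝ)..1, (t:ℂ)^J.card * pd n j (ω J) (p.2 + t • (p.1 - p.2), p.2))))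
      + ((∑ j ∈ Jᶜ, ∑ k ∈ J,
          ((sgn n j J * sgn n k (insert j (J.erase k))) * (p.1 j - p.2 j)) *
            ∫ t in (0:ℝ)..1,
              (t:ℂ)^J.card * pd n k (ω (insert j (J.erase k))) (p.2 + t • (p.1 - p.2), p.2))
      + (∑ j ∈ J, ∑ k ∈ Jᶜ,
          ((sgn n j (J.erase j) * sgn n k (J.erase j)) * (p.1 k - p.2 k)) *
            ∫ t in (0:ℝ)..1,
              (t:ℂ)^J.card * pd n j (ω (insert k (J.erase j))) (p.2 + t • (p.1 - p.2), p.2))) := by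
        ring
    _ = ω J p - res n ω J p := by rw [hcancel, add_zero]; exact final

end TwistedKoszul

namespace TwistedKoszul

/-- For every `0 ≤ q ≤ n` and every `ω ∈ K^{-q}`,
`d_K(P ω) + P(d_K ω) = ω - res(ω)` on `U × U`, where `res = 0` on `K^{-q}` for
`q ≥ 1` and `res(f)(z, ζ) = f(ζ, ζ)` for `f ∈ K^0`.  In particular, for every
`f ∈ K^0`, `d_K(P f)(z, ζ) = f(z, ζ) - f(ζ, ζ)` for all `(z, ζ) ∈ U × U`. -/
theorem statement0 (n : ℕ) (hn : 1 ≤ n)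
    (U : Set (Fin n → ℂ)) (hUopen : IsOpen U) (hUconv : Convex ℝ U)
    (hUne : U.Nonempty)
    (q : ℕ) (hq : q ≤ n) (ω : Coeff n) (hω : MemK n U q ω) :
    (∀ J : Finset (Fin n), ∀ p ∈ U ×ˢ U,
        dK n (P n ω) J p + P n (dK n ω) J p = ω J p - res n ω J p) ∧
    (∀ f : Pt n → ℂ, DifferentiableOn ℂ f (U ×ˢ U) →
        ∀ p ∈ U ×ˢ U, dK n (P n (ofFun n f)) ∅ p = f p - f (p.2, p.2)) := by
  constructor
  · exact fun J p hp => key hUopen hUconv ω hω.2 J p hp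
  · intro f hf p hp
    have hdf : ∀ I, DifferentiableOn ℂ (ofFun n f I) (U ×ˢ U) := by
      intro I
      by_cases hI : I = ∅
      · subst hI
        rw [show ofFun n f ∅ = f from funext fun x => by simp [ofFun]]; exact hf
      · have : ofFun n f I = fun _ => (0:ℂ) := by funext x; simp [ofFun, hI]
        rw [this]
        exact differentiableOn_const 0
    have h := key hUopen hUconv (ofFun n f) hdf ∅ p hp
    have hP : P n (dK n (ofFun n f)) ∅ p = 0 := by simp [P]
    have hres : res n (ofFun n f) ∅ p = f (p.2, p.2) := by simp [res, ofFun]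
    have hof : ofFun n f ∅ p = f p := by simp [ofFun]
    rw [hP, add_zero, hres, hof] at h
    exact h

end TwistedKoszul
end

section
/- Let φ = (φ¹,…,φⁿ) : U → ℂⁿ be a holomorphic map. Define ℂ-linear maps A^{−q} : Λ^q(ℂⁿ) → K^{−q} by A^0(1) = 1 and, recursively for 1 ≤ q ≤ n and strictly increasing I = (i₁ < … < i_q), A^{−q}(e^I) = P( Σ_{r=1}^{q} (−1)^{r−1} (φ^{i_r}(z) − φ^{i_r}(ζ)) · A^{−(q−1)}(e^{I_r}) ), where I_r is I with i_r omitted and the function (z,ζ) ↦ φ^{i_r}(z) − φ^{i_r}(ζ) multiplies the coefficients. Then for every such I and every z ∈ U, the restriction to the diagonal is A^{−q}(e^I)(z, z) = (Σ_j (∂φ^{i₁}/∂z^j)(z) e^j) ∧ … ∧ (Σ_j (∂φ^{i_q}/∂z^j)(z) e^j); that is, A^{−q} restricted to the diagonal acts as the q-th exterior power of the Jacobian matrix of φ. -/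
/-!
Setting: `n ≥ 1`, `U ⊆ ℂⁿ` a nonempty convex open set.  Points of `U × U` are
written `p = (z, ζ)` with `z = p.1`, `ζ = p.2`.  For `0 ≤ q ≤ n`,
`K^{-q} = Λ^q(ℂⁿ) ⊗ O(U×U)` is encoded by the coefficients of its elements on
the basis `e^I`, where the strictly increasing multi-indices
`I = (i₁ < … < i_q)` are encoded as finsets `I ⊆ Fin n` of cardinality `q`.
-/

open scoped BigOperators


set_option maxHeartbeats 1000000
set_option synthInstance.maxHeartbeats 400000

section SCVAux
open Metric Set MeasureTheory

variable {E : Type*} [NormedAddCommGroup E] [NormedSpace ℂ E]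


variable {E : Type*} [NormedAddCommGroup E] [NormedSpace ℂ E]

/-- Cauchy estimate for the Fréchet derivative via one-variable slices. -/
lemma norm_fderiv_le_of_bound {h : E → ℂ} {V : Set E} (hV : IsOpen V)
    (hd : DifferentiableOn ℂ h V) {y : E} {s M : ℝ} (hs : 0 < s)
    (hball : closedBall y s ⊆ V) (hM : ∀ z ∈ closedBall y s, ‖h z‖ ≤ M) :
    ‖fderiv ℂ h y‖ ≤ M / s := by
  have hy : DifferentiableAt ℂ h y :=
    hd.differentiableAt (hV.mem_nhds (hball (mem_closedBall_self hs.le)))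
  have hM0 : 0 ≤ M := (norm_nonneg _).trans (hM y (mem_closedBall_self hs.le))
  refine ContinuousLinearMap.opNorm_le_bound _ (by positivity) fun v => ?_
  rcases eq_or_ne v 0 with rfl | hv
  · simp
  have hvn : 0 < ‖v‖ := norm_pos_iff.2 hv
  have hρ : (0:ℝ) < s / ‖v‖ := by positivity
  set ρ : NNReal := ⟨s / ‖v‖, hρ.le⟩ with hρdef
  have hρpos : 0 < ρ := by exact_mod_cast hρ
  set g : ℂ → ℂ := fun w => h (y + w • v) with hg
  have hmap : ∀ w ∈ closedBall (0:ℂ) (ρ:ℝ), y + w • v ∈ closedBall y s := by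
    intro w hw
    simp only [mem_closedBall, dist_eq_norm] at hw ⊢
    have : ‖y + w • v - y‖ = ‖w‖ * ‖v‖ := by
      rw [add_sub_cancel_left, norm_smul]
    rw [this]
    calc ‖w‖ * ‖v‖ ≤ (s / ‖v‖) * ‖v‖ := by
          apply mul_le_mul_of_nonneg_right _ hvn.le
          exact (by simpa using hw : ‖w‖ ≤ (ρ:ℝ))
      _ = s := div_mul_cancel₀ s hvn.ne'
  have hgd : DifferentiableOn ℂ g (closedBall (0:ℂ) (ρ:ℝ)) := by
    apply hd.comp (f := fun w : ℂ => y + w • v)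
    · exact (differentiable_id.smul_const v).const_add y |>.differentiableOn
    · exact fun w hw => hball (hmap w hw)
  have hps := hgd.hasFPowerSeriesOnBall hρpos
  have hda : HasDerivAt g (fderiv ℂ h y v) 0 := by
    have h1 : HasDerivAt (fun w : ℂ => y + w • v) v 0 := by
      simpa using ((hasDerivAt_id (0:ℂ)).smul_const v).const_add y
    have h2 : HasFDerivAt h (fderiv ℂ h y) (y + (0:ℂ) • v) := by
      simpa using hy.hasFDerivAt
    exact h2.comp_hasDerivAt (0:ℂ) h1
  have hder : fderiv ℂ h y v = (cauchyPowerSeries g 0 ρ 1) fun _ => 1 := by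
    rw [← hda.deriv]; exact hps.hasFPowerSeriesAt.deriv
  rw [hder]
  have hb1 : ‖(cauchyPowerSeries g 0 ρ 1) fun _ => 1‖ ≤ ‖cauchyPowerSeries g 0 ρ 1‖ := by
    simpa using (cauchyPowerSeries g 0 ρ 1).le_opNorm fun _ => 1
  have hb2 := norm_cauchyPowerSeries_le g 0 ρ 1
  have hint : (∫ θ : ℝ in (0)..2 * Real.pi, ‖g (circleMap 0 ρ θ)‖) ≤ 2 * Real.pi * M := by
    have hmem : ∀ θ : ℝ, y + circleMap 0 ρ θ • v ∈ closedBall y s := fun θ =>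
      hmap _ (circleMap_mem_closedBall 0 (by positivity) θ)
    have hc : ContinuousOn (fun θ : ℝ => ‖g (circleMap 0 ρ θ)‖) (uIcc 0 (2 * Real.pi)) := by
      apply ContinuousOn.norm
      apply hd.continuousOn.comp (Continuous.continuousOn (by continuity))
      intro θ _
      exact hball (hmem θ)
    calc (∫ θ : ℝ in (0)..2 * Real.pi, ‖g (circleMap 0 ρ θ)‖)
        ≤ ∫ _ : ℝ in (0)..2 * Real.pi, M := by
          apply intervalIntegral.integral_mono_on Real.two_pi_pos.le
            hc.intervalIntegrable intervalIntegrable_const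
          intro θ _
          exact hM _ (hmem θ)
      _ = 2 * Real.pi * M := by simp [mul_comm]
  have habs : |(ρ:ℝ)|⁻¹ ^ 1 = (s / ‖v‖)⁻¹ := by
    have : (ρ:ℝ) = s / ‖v‖ := rfl
    rw [pow_one, this, abs_of_nonneg hρ.le]
  calc ‖(cauchyPowerSeries g 0 ρ 1) fun _ => 1‖
      ≤ ((2 * Real.pi)⁻¹ * ∫ θ : ℝ in (0)..2 * Real.pi, ‖g (circleMap 0 ρ θ)‖) * |(ρ:ℝ)|⁻¹ ^ 1 :=
        hb1.trans hb2
    _ ≤ ((2 * Real.pi)⁻¹ * (2 * Real.pi * M)) * |(ρ:ℝ)|⁻¹ ^ 1 := by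
        apply mul_le_mul_of_nonneg_right _ (by positivity)
        exact mul_le_mul_of_nonneg_left hint (by positivity)
    _ = M / s * ‖v‖ := by
        rw [habs]
        field_simp

variable [FiniteDimensional ℂ E]

/-- Directional derivatives of a holomorphic function on finite-dimensional space
are holomorphic. -/
lemma pd_differentiableOn {h : E → ℂ} {V : Set E} (hV : IsOpen V)
    (hd : DifferentiableOn ℂ h V) (v : E) :
    DifferentiableOn ℂ (fun x => fderiv ℂ h x v) V := by
  borelize E
  intro x₀ hx₀
  suffices hsuff : DifferentiableAt ℂ (fun x => fderiv ℂ h x v) x₀ from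
    hsuff.differentiableWithinAt
  obtain ⟨R, hR, hRV⟩ : ∃ R > 0, closedBall x₀ R ⊆ V := by
    rcases (Metric.isOpen_iff.1 hV x₀ hx₀) with ⟨r, hr, hrV⟩
    exact ⟨r / 2, by positivity, (closedBall_subset_ball (by linarith)).trans hrV⟩
  obtain ⟨M, hM⟩ : ∃ M, ∀ z ∈ closedBall x₀ R, ‖h z‖ ≤ M :=
    (isCompact_closedBall x₀ R).exists_bound_of_continuousOn
      (hd.continuousOn.mono hRV)
  have hM0 : 0 ≤ M := (norm_nonneg _).trans (hM x₀ (mem_closedBall_self hR.le))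
  set ρ : ℝ := R / (4 * (‖v‖ + 1)) with hρdef
  have hρ : 0 < ρ := by positivity
  have hρv : 2 * ρ * ‖v‖ ≤ R / 2 := by
    have hpos : (0:ℝ) < 4 * (‖v‖ + 1) := by positivity
    have heq : 2 * ρ * ‖v‖ = R * (2 * ‖v‖) / (4 * (‖v‖ + 1)) := by rw [hρdef]; ring
    rw [heq, div_le_div_iff₀ hpos two_pos]
    nlinarith [norm_nonneg v, hR]
  -- points of the form x + w • v with x ∈ ball x₀ (R/4), |w| ≤ 2ρ lie in closedBall x₀ R
  have hmem : ∀ x ∈ ball x₀ (R / 4), ∀ w : ℂ, ‖w‖ ≤ 2 * ρ →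
      x + w • v ∈ closedBall x₀ R := by
    intro x hx w hw
    have : ‖x + w • v - x₀‖ ≤ ‖x - x₀‖ + ‖w‖ * ‖v‖ := by
      calc ‖x + w • v - x₀‖ = ‖(x - x₀) + w • v‖ := by rw [add_sub_right_comm]
        _ ≤ ‖x - x₀‖ + ‖w • v‖ := norm_add_le _ _
        _ = ‖x - x₀‖ + ‖w‖ * ‖v‖ := by rw [norm_smul]
    simp only [mem_ball, dist_eq_norm] at hx
    simp only [mem_closedBall, dist_eq_norm]
    have h2 : ‖w‖ * ‖v‖ ≤ R / 2 := by
      calc ‖w‖ * ‖v‖ ≤ (2 * ρ) * ‖v‖ :=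
            mul_le_mul_of_nonneg_right hw (norm_nonneg v)
        _ ≤ R / 2 := hρv
    linarith
  -- the circle kernel
  set c : ℝ → ℂ := fun θ =>
    deriv (circleMap 0 (2 * ρ)) θ * (circleMap 0 (2 * ρ) θ) ^ (-2 : ℤ) with hcdef
  have h2ρ : (0:ℝ) < 2 * ρ := by positivity
  have hccont : Continuous c := by
    have h1 : Continuous fun θ : ℝ => deriv (circleMap 0 (2 * ρ)) θ := by
      simp only [deriv_circleMap]
      exact (continuous_circleMap 0 (2 * ρ)).mul continuous_const
    have h2 : Continuous fun θ : ℝ => (circleMap 0 (2 * ρ) θ) ^ (-2 : ℤ) :=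
      (continuous_circleMap 0 (2 * ρ)).zpow₀ (-2)
        (fun θ => Or.inl (circleMap_ne_center h2ρ.ne'))
    exact h1.mul h2
  have hcnorm : ∀ θ : ℝ, ‖c θ‖ = (2 * ρ)⁻¹ := by
    intro θ
    rw [hcdef]
    simp only [deriv_circleMap, norm_mul, norm_zpow,
      Complex.norm_I, norm_circleMap_zero, mul_one, abs_of_pos h2ρ]
    rw [zpow_neg, zpow_two]
    field_simp
  -- the integral representation
  have hrep : ∀ x ∈ ball x₀ (R / 4),
      fderiv ℂ h x v = (2 * Real.pi * Complex.I)⁻¹ •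
        ∫ θ in (0:ℝ)..(2 * Real.pi), c θ * h (x + circleMap 0 (2 * ρ) θ • v) := by
    intro x hx
    have hxV : x ∈ V := hRV (ball_subset_closedBall (ball_subset_ball (by linarith) hx))
    set g : ℂ → ℂ := fun w => h (x + w • v) with hgdef
    have hgd : DifferentiableOn ℂ g (closedBall (0:ℂ) (2 * ρ)) := by
      apply hd.comp (f := fun w : ℂ => x + w • v)
      · exact (differentiable_id.smul_const v).const_add x |>.differentiableOn
      · intro w hw
        exact hRV (hmem x hx w (by simpa [dist_eq_norm] using hw))
    have hdc : DiffContOnCl ℂ g (ball (0:ℂ) (2 * ρ)) := by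
      apply DifferentiableOn.diffContOnCl
      rwa [closure_ball (0:ℂ) h2ρ.ne']
    have hda : HasDerivAt g (fderiv ℂ h x v) 0 := by
      have h1 : HasDerivAt (fun w : ℂ => x + w • v) v 0 := by
        simpa using ((hasDerivAt_id (0:ℂ)).smul_const v).const_add x
      have h2 : HasFDerivAt h (fderiv ℂ h x) (x + (0:ℂ) • v) := by
        simpa using (hd.differentiableAt (hV.mem_nhds hxV)).hasFDerivAt
      exact h2.comp_hasDerivAt (0:ℂ) h1
    have := (by rw [hdc.deriv_eq_smul_circleIntegral h2ρ, smul_smul, inv_mul_cancel₀ (by simp [Real.pi_ne_zero]), one_smul] : deriv g 0 = (2 * Real.pi * Complex.I)⁻¹ • circleIntegral (fun z => (1 / (z - 0) ^ 2) • g z) 0 (2 * ρ))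
    rw [hda.deriv] at this
    rw [this]
    congr 1
    rw [circleIntegral]
    apply intervalIntegral.integral_congr
    intro θ _
    simp only [hcdef, smul_eq_mul, sub_zero, hgdef, zpow_neg, zpow_two, one_div]
    ring
  -- now differentiate under the integral sign
  set F : E → ℝ → ℂ := fun x θ => c θ * h (x + circleMap 0 (2 * ρ) θ • v) with hFdef
  set F' : E → ℝ → E →L[ℂ] ℂ := fun x θ =>
    c θ • fderiv ℂ h (x + circleMap 0 (2 * ρ) θ • v) with hF'def
  have hmem' : ∀ x ∈ ball x₀ (R / 4), ∀ θ : ℝ,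
      x + circleMap 0 (2 * ρ) θ • v ∈ closedBall x₀ R := fun x hx θ =>
    hmem x hx _ (by rw [norm_circleMap_zero, abs_of_pos h2ρ])
  have hVmem : ∀ x ∈ ball x₀ (R / 4), ∀ θ : ℝ,
      x + circleMap 0 (2 * ρ) θ • v ∈ V := fun x hx θ => hRV (hmem' x hx θ)
  have hcontF : ∀ x ∈ ball x₀ (R / 4), Continuous (F x) := by
    intro x hx
    apply hccont.mul
    apply (hd.continuousOn.comp_continuous (by continuity) (hVmem x hx))
  have key : HasFDerivAt (fun x => ∫ θ in (0:ℝ)..(2 * Real.pi), F x θ)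
      (∫ θ in (0:ℝ)..(2 * Real.pi), F' x₀ θ) x₀ := by
    apply intervalIntegral.hasFDerivAt_integral_of_dominated_of_fderiv_le
      (s := ball x₀ (R / 4)) (bound := fun _ => (2 * ρ)⁻¹ * (M / (R / 4))) (ball_mem_nhds x₀ (by positivity))
    · filter_upwards [ball_mem_nhds x₀ (by positivity : (0:ℝ) < R / 4)] with x hx
      exact (hcontF x hx).aestronglyMeasurable
    · exact ((hcontF x₀ (mem_ball_self (by positivity))).intervalIntegrable _ _)
    · apply AEStronglyMeasurable.fun_smul
      · exact hccont.aestronglyMeasurable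
      · apply Measurable.aestronglyMeasurable
        apply (measurable_fderiv ℂ h).comp
        exact (continuous_const.add
          ((continuous_circleMap 0 (2 * ρ)).smul continuous_const)).measurable
    · apply Filter.Eventually.of_forall
      intro θ _ x hx
      rw [hF'def]
      simp only
      have hns := norm_smul (c θ) (fderiv ℂ h (x + circleMap 0 (2 * ρ) θ • v))
      rw [hns, hcnorm θ]
      apply mul_le_mul_of_nonneg_left _ (by positivity)
      -- Cauchy estimate at the point y := x + circleMap θ • v
      set y := x + circleMap 0 (2 * ρ) θ • v with hydef
      have hyball : y ∈ ball x₀ (3 * R / 4) := by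
        have h1 : ‖y - x₀‖ ≤ ‖x - x₀‖ + ‖circleMap 0 (2 * ρ) θ‖ * ‖v‖ := by
          calc ‖y - x₀‖ = ‖(x - x₀) + circleMap 0 (2 * ρ) θ • v‖ := by
                rw [hydef, add_sub_right_comm]
            _ ≤ ‖x - x₀‖ + ‖circleMap 0 (2 * ρ) θ • v‖ := norm_add_le _ _
            _ = ‖x - x₀‖ + ‖circleMap 0 (2 * ρ) θ‖ * ‖v‖ := by rw [norm_smul]
        have h2 : ‖circleMap 0 (2 * ρ) θ‖ * ‖v‖ ≤ R / 2 := by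
          rw [norm_circleMap_zero, abs_of_pos h2ρ]
          exact hρv
        simp only [mem_ball, dist_eq_norm] at hx ⊢
        linarith
      have hsub : closedBall y (R / 4) ⊆ closedBall x₀ R := by
        intro z hz
        simp only [mem_closedBall, dist_eq_norm] at hz ⊢
        have : ‖z - x₀‖ ≤ ‖z - y‖ + ‖y - x₀‖ := norm_sub_le_norm_sub_add_norm_sub z y x₀
        simp only [mem_ball, dist_eq_norm] at hyball
        linarith
      have := norm_fderiv_le_of_bound hV hd (by positivity : (0:ℝ) < R / 4)
        (hsub.trans hRV) (fun z hz => hM z (hsub hz))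
      exact this
    · exact intervalIntegrable_const
    · apply Filter.Eventually.of_forall
      intro θ _ x hx
      have hdx : DifferentiableAt ℂ h (x + circleMap 0 (2 * ρ) θ • v) :=
        hd.differentiableAt (hV.mem_nhds (hVmem x hx θ))
      have h1 : HasFDerivAt (fun y : E => y + circleMap 0 (2 * ρ) θ • v)
          (ContinuousLinearMap.id ℂ E) x := by
        simpa using (hasFDerivAt_id x).add_const (circleMap 0 (2 * ρ) θ • v)
      have := (hdx.hasFDerivAt.comp x h1).const_mul (c θ)
      rw [hF'def, hFdef]
      simpa using this
  have : DifferentiableAt ℂ (fun x => (2 * Real.pi * Complex.I)⁻¹ •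
      ∫ θ in (0:ℝ)..(2 * Real.pi), F x θ) x₀ :=
    key.differentiableAt.const_smul ((2 * Real.pi * Complex.I)⁻¹)
  apply this.congr_of_eventuallyEq
  filter_upwards [ball_mem_nhds x₀ (by positivity : (0:ℝ) < R / 4)] with x hx
  exact hrep x hx

end SCVAux

namespace TwistedKoszul

/-- The holomorphic partial derivative `∂g/∂z^j` of a function on `ℂⁿ`. -/
noncomputable def pdU (n : ℕ) (j : Fin n) (g : (Fin n → ℂ) → ℂ)
    (z : Fin n → ℂ) : ℂ :=
  fderiv ℂ g z (Pi.single j 1)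

variable (n : ℕ)

/-- The recursively defined chain map `A^{-q} : Λ^q(ℂⁿ) → K^{-q}` attached to a
holomorphic map `φ : U → ℂⁿ`: `A^0(1) = 1` and
`A^{-q}(e^I) = P(Σ_{r=1}^q (-1)^{r-1} (φ^{i_r}(z) - φ^{i_r}(ζ)) A^{-(q-1)}(e^{I_r}))`. -/
noncomputable def Abar (φ : (Fin n → ℂ) → (Fin n → ℂ)) (I : Finset (Fin n)) :
    Coeff n :=
  if I = ∅ then ofFun n (fun _ => 1)
  else
    P n (fun J p => ∑ i ∈ I.attach,
      sgn n i.1 (I.erase i.1) *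
        ((φ p.1 i.1 - φ p.2 i.1) * Abar φ (I.erase i.1) J p))
termination_by I.card
decreasing_by exact Finset.card_erase_lt_of_mem i.2


section Aux
open Metric Set MeasureTheory

/-- The affine path map as a continuous linear map. -/
noncomputable def Acl (n : ℕ) (t : ℝ) : Pt n →L[ℂ] Pt n :=
  ((ContinuousLinearMap.snd ℂ (Fin n → ℂ) (Fin n → ℂ)) +
    ((t : ℂ)) • ((ContinuousLinearMap.fst ℂ (Fin n → ℂ) (Fin n → ℂ)) -
      (ContinuousLinearMap.snd ℂ (Fin n → ℂ) (Fin n → ℂ)))).prod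
    (ContinuousLinearMap.snd ℂ (Fin n → ℂ) (Fin n → ℂ))

lemma real_smul_eq {n : ℕ} (t : ℝ) (w : Fin n → ℂ) : (t : ℂ) • w = t • w := by
  funext i
  simp [Complex.real_smul]

lemma Acl_apply {n : ℕ} (t : ℝ) (p : Pt n) :
    Acl n t p = (p.2 + t • (p.1 - p.2), p.2) := by
  simp only [Acl, ContinuousLinearMap.prod_apply, ContinuousLinearMap.add_apply,
    ContinuousLinearMap.coe_snd', ContinuousLinearMap.coe_smul',
    ContinuousLinearMap.coe_sub', ContinuousLinearMap.coe_fst', Pi.smul_apply, Pi.sub_apply]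
  rw [real_smul_eq]

lemma Acl_eq_affine (n : ℕ) : (fun t : ℝ => Acl n t) = fun t : ℝ =>
    ((ContinuousLinearMap.snd ℂ (Fin n → ℂ) (Fin n → ℂ)).prod
      (ContinuousLinearMap.snd ℂ (Fin n → ℂ) (Fin n → ℂ))) +
    (t : ℂ) • (((ContinuousLinearMap.fst ℂ (Fin n → ℂ) (Fin n → ℂ)) -
      (ContinuousLinearMap.snd ℂ (Fin n → ℂ) (Fin n → ℂ))).prod 0) := by
  funext t
  ext p <;>
  · simp [Acl]
    try ring

lemma Acl_continuous (n : ℕ) : Continuous fun t : ℝ => Acl n t := by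
  rw [Acl_eq_affine]
  exact continuous_const.add (Complex.continuous_ofReal.smul continuous_const)

lemma Acl_norm_le (n : ℕ) {t : ℝ} (ht : |t| ≤ 1) :
    ‖Acl n t‖ ≤ ‖((ContinuousLinearMap.snd ℂ (Fin n → ℂ) (Fin n → ℂ)).prod
      (ContinuousLinearMap.snd ℂ (Fin n → ℂ) (Fin n → ℂ)))‖ +
      ‖(((ContinuousLinearMap.fst ℂ (Fin n → ℂ) (Fin n → ℂ)) -
        (ContinuousLinearMap.snd ℂ (Fin n → ℂ) (Fin n → ℂ))).prod
        (0 : Pt n →L[ℂ] (Fin n → ℂ)))‖ := by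
  have := congrFun (Acl_eq_affine n) t
  rw [this]
  refine (norm_add_le _ _).trans (add_le_add le_rfl ?_)
  have hns := norm_smul (α := ℂ) ((t:ℂ))
    (((ContinuousLinearMap.fst ℂ (Fin n → ℂ) (Fin n → ℂ)) -
        (ContinuousLinearMap.snd ℂ (Fin n → ℂ) (Fin n → ℂ))).prod
        (0 : Pt n →L[ℂ] (Fin n → ℂ)))
  rw [hns]
  have ht' : ‖(t:ℂ)‖ ≤ 1 := by simpa using ht
  exact mul_le_of_le_one_left (norm_nonneg _) ht'

/-- Differentiability of the basic integral operator appearing in `P`. -/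
lemma P_term_differentiableOn {n : ℕ} {U : Set (Fin n → ℂ)}
    (hUopen : IsOpen U) (hUconv : Convex ℝ U)
    {g : Pt n → ℂ} (hg : DifferentiableOn ℂ g (U ×ˢ U)) (k : ℕ) (j : Fin n) :
    DifferentiableOn ℂ
      (fun p : Pt n => ∫ t in (0:ℝ)..1, (t:ℂ) ^ k * pd n j g (p.2 + t • (p.1 - p.2), p.2))
      (U ×ˢ U) := by
  have hW : IsOpen (U ×ˢ U) := hUopen.prod hUopen
  -- rewrite via `Acl`
  have hfun : (fun p : Pt n => ∫ t in (0:ℝ)..1, (t:ℂ) ^ k * pd n j g (p.2 + t • (p.1 - p.2), p.2))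
      = fun p : Pt n => ∫ t in (0:ℝ)..1, (t:ℂ) ^ k * pd n j g (Acl n t p) := by
    funext p
    apply intervalIntegral.integral_congr
    intro t _
    simp only [Acl_apply]
  rw [hfun]
  set G : Pt n → ℂ := pd n j g with hGdef
  have hG : DifferentiableOn ℂ G (U ×ˢ U) :=
    pd_differentiableOn hW hg ((Pi.single j 1, 0) : Pt n)
  intro x₀ hx₀
  suffices hsuff : DifferentiableAt ℂ
      (fun p : Pt n => ∫ t in (0:ℝ)..1, (t:ℂ) ^ k * G (Acl n t p)) x₀ from
    hsuff.differentiableWithinAt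
  -- choose ε with the closed ball inside U ×ˢ U
  obtain ⟨ε, hε, hball⟩ : ∃ ε > 0, closedBall x₀ ε ⊆ U ×ˢ U := by
    rcases Metric.isOpen_iff.1 hW x₀ hx₀ with ⟨r, hr, hrW⟩
    exact ⟨r / 2, by positivity, (closedBall_subset_ball (by linarith)).trans hrW⟩
  -- the compact set of path points
  have hAcont2 : Continuous fun q : ℝ × Pt n => Acl n q.1 q.2 := by
    have h1 : Continuous fun q : ℝ × Pt n => (Acl n q.1, q.2) :=
      ((Acl_continuous n).comp continuous_fst).prodMk continuous_snd
    exact isBoundedBilinearMap_apply.continuous.comp h1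
  set K : Set (Pt n) := (fun q : ℝ × Pt n => Acl n q.1 q.2) '' (Icc 0 1 ×ˢ closedBall x₀ ε)
    with hKdef
  have hKcompact : IsCompact K :=
    (isCompact_Icc.prod (isCompact_closedBall x₀ ε)).image hAcont2
  have hKsub : K ⊆ U ×ˢ U := by
    rintro - ⟨⟨t, x⟩, ⟨ht, hx⟩, rfl⟩
    have hxW : x ∈ U ×ˢ U := hball hx
    simp only [Acl_apply]
    refine ⟨hUconv.add_smul_sub_mem hxW.2 hxW.1 ht, hxW.2⟩
  obtain ⟨δ, hδ, hδsub⟩ := hKcompact.exists_thickening_subset_open hW hKsub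
  set K' : Set (Pt n) := cthickening (δ / 2) K with hK'def
  have hK'compact : IsCompact K' :=
    isCompact_of_isClosed_isBounded isClosed_cthickening hKcompact.isBounded.cthickening
  have hK'sub : K' ⊆ U ×ˢ U := by
    refine subset_trans ?_ hδsub
    exact cthickening_subset_thickening' hδ (by linarith) K
  obtain ⟨MG, hMG⟩ := hK'compact.exists_bound_of_continuousOn (hG.continuousOn.mono hK'sub)
  have hMG0 : 0 ≤ MG := by
    have : Acl n 0 x₀ ∈ K := ⟨(0, x₀), ⟨⟨le_rfl, zero_le_one⟩, mem_closedBall_self hε.le⟩, rfl⟩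
    exact (norm_nonneg _).trans (hMG _ (self_subset_cthickening K this))
  -- bound for fderiv G on K
  have hfdb : ∀ y ∈ K, ‖fderiv ℂ G y‖ ≤ MG / (δ / 2) := by
    intro y hy
    have hyball : closedBall y (δ / 2) ⊆ K' := fun z hz =>
      mem_cthickening_of_dist_le z y (δ / 2) K hy (by simpa [dist_comm] using hz)
    exact norm_fderiv_le_of_bound hW hG (by positivity) (hyball.trans hK'sub)
      (fun z hz => hMG z (hyball hz))
  set CA : ℝ := ‖((ContinuousLinearMap.snd ℂ (Fin n → ℂ) (Fin n → ℂ)).prod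
      (ContinuousLinearMap.snd ℂ (Fin n → ℂ) (Fin n → ℂ)))‖ +
      ‖(((ContinuousLinearMap.fst ℂ (Fin n → ℂ) (Fin n → ℂ)) -
        (ContinuousLinearMap.snd ℂ (Fin n → ℂ) (Fin n → ℂ))).prod
        (0 : Pt n →L[ℂ] (Fin n → ℂ)))‖ with hCAdef
  have hCA0 : 0 ≤ CA := add_nonneg (norm_nonneg _) (norm_nonneg _)
  -- membership of path points
  have hpath : ∀ t ∈ Icc (0:ℝ) 1, ∀ x ∈ closedBall x₀ ε, Acl n t x ∈ K :=
    fun t ht x hx => ⟨(t, x), ⟨ht, hx⟩, rfl⟩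
  have hIsub : Set.uIoc (0:ℝ) 1 ⊆ Icc (0:ℝ) 1 := by
    rw [Set.uIoc_of_le (zero_le_one)]
    exact Ioc_subset_Icc_self
  -- continuity in t
  have hcont : ∀ x ∈ closedBall x₀ ε, ContinuousOn
      (fun t : ℝ => (t:ℂ) ^ k * G (Acl n t x)) (Icc 0 1) := by
    intro x hx
    apply ContinuousOn.mul
    · exact (Continuous.pow (by continuity) k).continuousOn
    · apply hG.continuousOn.comp
      · exact ((hAcont2.comp (continuous_id.prodMk continuous_const)).continuousOn)
      · intro t ht
        exact hKsub (hpath t ht x hx)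
  set F' : Pt n → ℝ → Pt n →L[ℂ] ℂ := fun x t =>
    (t:ℂ) ^ k • ((fderiv ℂ G (Acl n t x)).comp (Acl n t)) with hF'def
  have key : HasFDerivAt (fun x => ∫ t in (0:ℝ)..1, (t:ℂ) ^ k * G (Acl n t x))
      (∫ t in (0:ℝ)..1, F' x₀ t) x₀ := by
    apply intervalIntegral.hasFDerivAt_integral_of_dominated_of_fderiv_le
      (s := ball x₀ ε) (bound := fun _ => (MG / (δ / 2)) * CA) (ball_mem_nhds x₀ hε)
    · filter_upwards [closedBall_mem_nhds x₀ hε] with x hx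
      exact ((hcont x hx).mono hIsub).aestronglyMeasurable measurableSet_uIoc
    · exact ((hcont x₀ (mem_closedBall_self hε.le)).mono
        (by rw [Set.uIcc_of_le (zero_le_one)]) |>.intervalIntegrable)
    · -- measurability of F' x₀
      rw [hF'def]
      apply AEStronglyMeasurable.fun_smul
      · exact (Complex.continuous_ofReal.pow k).aestronglyMeasurable
      · have h1 : StronglyMeasurable fun t : ℝ => fderiv ℂ G (Acl n t x₀) := by
          borelize (Pt n)
          exact ((measurable_fderiv ℂ G).comp
            ((Acl_continuous n).clm_apply continuous_const).measurable).stronglyMeasurable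
        have h2 : StronglyMeasurable fun t : ℝ => Acl n t :=
          (Acl_continuous n).stronglyMeasurable
        exact (isBoundedBilinearMap_comp.continuous.comp_aestronglyMeasurable
          (h1.aestronglyMeasurable.prodMk h2.aestronglyMeasurable))
    · apply Filter.Eventually.of_forall
      intro t ht x hx
      have ht' : t ∈ Icc (0:ℝ) 1 := hIsub ht
      have habs : |t| ≤ 1 := abs_le.2 ⟨by linarith [ht'.1], ht'.2⟩
      have h1 : ‖F' x t‖ ≤ ‖(t:ℂ) ^ k‖ * (‖fderiv ℂ G (Acl n t x)‖ * ‖Acl n t‖) := by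
        rw [hF'def]
        simp only
        have hns := norm_smul (α := ℂ) ((t:ℂ) ^ k) ((fderiv ℂ G (Acl n t x)).comp (Acl n t))
        rw [hns]
        exact mul_le_mul_of_nonneg_left (ContinuousLinearMap.opNorm_comp_le _ _) (norm_nonneg _)
      refine h1.trans ?_
      have h2 : ‖(t:ℂ) ^ k‖ ≤ 1 := by
        rw [norm_pow]
        apply pow_le_one₀ (norm_nonneg _)
        simpa using habs
      have h3 : ‖fderiv ℂ G (Acl n t x)‖ ≤ MG / (δ / 2) :=
        hfdb _ (hpath t ht' x (ball_subset_closedBall hx))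
      have h4 : ‖Acl n t‖ ≤ CA := Acl_norm_le n habs
      calc ‖(t:ℂ) ^ k‖ * (‖fderiv ℂ G (Acl n t x)‖ * ‖Acl n t‖)
          ≤ 1 * ((MG / (δ / 2)) * CA) := by
            apply mul_le_mul h2 (mul_le_mul h3 h4 (norm_nonneg _) (by positivity))
              (mul_nonneg (norm_nonneg _) (norm_nonneg _)) zero_le_one
        _ = (MG / (δ / 2)) * CA := one_mul _
    · exact intervalIntegrable_const
    · apply Filter.Eventually.of_forall
      intro t ht x hx
      have ht' : t ∈ Icc (0:ℝ) 1 := hIsub ht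
      have hmem : Acl n t x ∈ U ×ˢ U := hKsub (hpath t ht' x (ball_subset_closedBall hx))
      have hGd : DifferentiableAt ℂ G (Acl n t x) :=
        hG.differentiableAt (hW.mem_nhds hmem)
      have := (hGd.hasFDerivAt.comp x (Acl n t).hasFDerivAt).const_mul ((t:ℂ) ^ k)
      rw [hF'def]
      simpa [smul_smul] using this
  exact key.differentiableAt

/-- Summing over a finset via its order embedding. -/
lemma sum_eq_sum_fin {M : Type*} [AddCommMonoid M] {n : ℕ} (s : Finset (Fin n)) {q : ℕ}
    (h : s.card = q) (f : Fin n → M) :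
    ∑ a ∈ s, f a = ∑ r : Fin q, f (s.orderEmbOfFin h r) := by
  have himg : s = Finset.univ.image (s.orderEmbOfFin h) := by
    apply Finset.eq_of_subset_of_card_le
    · intro x hx
      have : x ∈ Set.range (s.orderEmbOfFin h) := by
        rw [Finset.range_orderEmbOfFin]; exact hx
      rcases this with ⟨r, hr⟩
      exact Finset.mem_image.2 ⟨r, Finset.mem_univ r, hr⟩
    · rw [Finset.card_image_of_injective _ (s.orderEmbOfFin h).injective]
      simp [h]
  have hsi := Finset.sum_image (s := (Finset.univ : Finset (Fin q))) (g := s.orderEmbOfFin h)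
    (f := f) (fun a _ b _ hab => (s.orderEmbOfFin h).injective hab)
  rw [← hsi, ← himg]

lemma filter_lt_orderEmbOfFin {n : ℕ} (s : Finset (Fin n)) {q : ℕ} (h : s.card = q)
    (r : Fin q) :
    (s.filter (fun x => x < s.orderEmbOfFin h r)).card = r := by
  have himg : s.filter (fun x => x < s.orderEmbOfFin h r)
      = (Finset.univ.filter (fun x : Fin q => x < r)).image (s.orderEmbOfFin h) := by
    ext x
    simp only [Finset.mem_filter, Finset.mem_image, Finset.mem_univ, true_and]
    constructor
    · rintro ⟨hxs, hlt⟩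
      have : x ∈ Set.range (s.orderEmbOfFin h) := by
        rw [Finset.range_orderEmbOfFin]; exact hxs
      rcases this with ⟨r', hr'⟩
      refine ⟨r', ?_, hr'⟩
      rw [← hr'] at hlt
      exact (OrderEmbedding.lt_iff_lt _).1 hlt
    · rintro ⟨r', hr', rfl⟩
      exact ⟨Finset.orderEmbOfFin_mem s h r', (OrderEmbedding.lt_iff_lt _).2 hr'⟩
  rw [himg, Finset.card_image_of_injective _ (s.orderEmbOfFin h).injective]
  rw [show Finset.univ.filter (fun x : Fin q => x < r) = Finset.Iio r from by ext x; simp]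
  exact Fin.card_Iio r

lemma sgn_orderEmbOfFin {n : ℕ} (s : Finset (Fin n)) {q : ℕ} (h : s.card = q) (r : Fin q) :
    sgn n (s.orderEmbOfFin h r) (s.erase (s.orderEmbOfFin h r)) = (-1 : ℂ) ^ (r : ℕ) := by
  set a := s.orderEmbOfFin h r with hadef
  have hfil : (s.erase a).filter (fun x => x < a) = s.filter (fun x => x < a) := by
    ext x
    simp only [Finset.mem_filter, Finset.mem_erase]
    constructor
    · rintro ⟨⟨_, hxs⟩, hlt⟩; exact ⟨hxs, hlt⟩
    · rintro ⟨hxs, hlt⟩; exact ⟨⟨ne_of_lt hlt, hxs⟩, hlt⟩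
  rw [sgn, hfil, filter_lt_orderEmbOfFin s h r]

lemma erase_orderEmbOfFin {n m : ℕ} (s : Finset (Fin n)) (h : s.card = m + 1)
    (r : Fin (m + 1)) (h' : (s.erase (s.orderEmbOfFin h r)).card = m) (c : Fin m) :
    (s.erase (s.orderEmbOfFin h r)).orderEmbOfFin h' c
      = s.orderEmbOfFin h (r.succAbove c) := by
  set f : Fin m ↪o Fin n := (r.succAboveOrderEmb).trans (s.orderEmbOfFin h) with hfdef
  have hmem : ∀ x : Fin m, f x ∈ s.erase (s.orderEmbOfFin h r) := by
    intro x
    rw [Finset.mem_erase]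
    refine ⟨?_, ?_⟩
    · intro heq
      rw [hfdef] at heq
      simp only [RelEmbedding.trans_apply] at heq
      exact Fin.succAbove_ne r x ((s.orderEmbOfFin h).injective heq)
    · rw [hfdef]
      simp only [RelEmbedding.trans_apply]
      exact Finset.orderEmbOfFin_mem s h _
  have heq := Finset.orderEmbOfFin_unique' h' hmem
  have h2 := DFunLike.congr_fun heq.symm c
  rw [hfdef] at h2
  simpa using h2

lemma det_avg (m : ℕ) (A : Matrix (Fin (m+1)) (Fin (m+1)) ℂ) :
    A.det = (((m:ℕ)+1 : ℕ):ℂ)⁻¹ * ∑ r : Fin (m+1), ∑ c : Fin (m+1),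
      (-1:ℂ)^((r:ℕ)+(c:ℕ)) * A r c * (A.submatrix r.succAbove c.succAbove).det := by
  have h1 : ∀ r : Fin (m+1), ∑ c : Fin (m+1),
      (-1:ℂ)^((r:ℕ)+(c:ℕ)) * A r c * (A.submatrix r.succAbove c.succAbove).det = A.det :=
    fun r => (Matrix.det_succ_row A r).symm
  rw [Finset.sum_congr rfl (fun r _ => h1 r), Finset.sum_const]
  rw [Finset.card_univ, Fintype.card_fin, nsmul_eq_mul, ← mul_assoc,
    inv_mul_cancel₀ (by exact_mod_cast Nat.succ_ne_zero m), one_mul]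

/-- The key combinatorial identity. -/
lemma main_det {n : ℕ} (m : ℕ) (I J : Finset (Fin n)) (hI : I.card = m + 1)
    (hJ : J.card = m + 1) (f : Fin n → Fin n → ℂ) (val : Fin n → Fin n → ℂ)
    (hval : ∀ i, ∀ hi : i ∈ I, ∀ j, ∀ hj : j ∈ J,
      val i j = Matrix.det (Matrix.of fun r c : Fin m =>
      f ((I.erase i).orderEmbOfFin (by rw [Finset.card_erase_of_mem hi, hI]; rfl) r)
        ((J.erase j).orderEmbOfFin (by rw [Finset.card_erase_of_mem hj, hJ]; rfl) c))) :
    ∑ j ∈ J, sgn n j (J.erase j) * ((((m:ℕ)+1 : ℕ):ℂ)⁻¹ *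
        ∑ i ∈ I, sgn n i (I.erase i) * (f i j * val i j))
      = Matrix.det (Matrix.of fun r c : Fin (m+1) =>
          f (I.orderEmbOfFin hI r) (J.orderEmbOfFin hJ c)) := by
  set A : Matrix (Fin (m+1)) (Fin (m+1)) ℂ :=
    Matrix.of fun r c => f (I.orderEmbOfFin hI r) (J.orderEmbOfFin hJ c) with hAdef
  have hminor : ∀ (r c : Fin (m+1)),
      val (I.orderEmbOfFin hI r) (J.orderEmbOfFin hJ c)
        = (A.submatrix r.succAbove c.succAbove).det := by
    intro r c
    rw [hval _ (Finset.orderEmbOfFin_mem I hI r) _ (Finset.orderEmbOfFin_mem J hJ c)]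
    congr 1
    ext r' c'
    simp only [Matrix.of_apply, Matrix.submatrix_apply, hAdef]
    rw [erase_orderEmbOfFin, erase_orderEmbOfFin]
  have hinner : ∀ c : Fin (m+1),
      (∑ i ∈ I, sgn n i (I.erase i) *
        (f i (J.orderEmbOfFin hJ c) * val i (J.orderEmbOfFin hJ c)))
      = ∑ r : Fin (m+1), (-1:ℂ)^(r:ℕ) *
          (A r c * (A.submatrix r.succAbove c.succAbove).det) := by
    intro c
    rw [sum_eq_sum_fin I hI]
    apply Finset.sum_congr rfl
    intro r _
    rw [sgn_orderEmbOfFin I hI r, hminor r c]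
    rfl
  rw [sum_eq_sum_fin J hJ]
  calc ∑ c : Fin (m+1), sgn n (J.orderEmbOfFin hJ c) (J.erase (J.orderEmbOfFin hJ c)) *
        ((((m:ℕ)+1 : ℕ):ℂ)⁻¹ * ∑ i ∈ I, sgn n i (I.erase i) *
          (f i (J.orderEmbOfFin hJ c) * val i (J.orderEmbOfFin hJ c)))
      = ∑ c : Fin (m+1), (-1:ℂ)^(c:ℕ) * ((((m:ℕ)+1 : ℕ):ℂ)⁻¹ *
          ∑ r : Fin (m+1), (-1:ℂ)^(r:ℕ) *
            (A r c * (A.submatrix r.succAbove c.succAbove).det)) := by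
        apply Finset.sum_congr rfl
        intro c _
        rw [sgn_orderEmbOfFin J hJ c, hinner c]
    _ = (((m:ℕ)+1 : ℕ):ℂ)⁻¹ * ∑ c : Fin (m+1), ∑ r : Fin (m+1),
          (-1:ℂ)^((r:ℕ)+(c:ℕ)) * A r c * (A.submatrix r.succAbove c.succAbove).det := by
        rw [Finset.mul_sum]
        apply Finset.sum_congr rfl
        intro c _
        rw [Finset.mul_sum, Finset.mul_sum, Finset.mul_sum]
        apply Finset.sum_congr rfl
        intro r _
        rw [pow_add]
        ring
    _ = (((m:ℕ)+1 : ℕ):ℂ)⁻¹ * ∑ r : Fin (m+1), ∑ c : Fin (m+1),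
          (-1:ℂ)^((r:ℕ)+(c:ℕ)) * A r c * (A.submatrix r.succAbove c.succAbove).det := by
        rw [Finset.sum_comm]
    _ = A.det := (det_avg m A).symm

/-- Cast lemma for the determinant matrices. -/
lemma det_pd_cast {n : ℕ} (g : Fin n → Fin n → ℂ) (I J : Finset (Fin n)) {m : ℕ}
    (hJI : J.card = I.card) (hIm : I.card = m) :
    Matrix.det (Matrix.of fun r c : Fin I.card =>
        g ((I.orderIsoOfFin rfl r) : Fin n) ((J.orderIsoOfFin hJI c) : Fin n))
      = Matrix.det (Matrix.of fun r c : Fin m =>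
        g (I.orderEmbOfFin hIm r) (J.orderEmbOfFin (hJI.trans hIm) c)) := by
  subst hIm
  congr 1

/-- Unfolding lemma for `P`. -/
lemma P_apply {n : ℕ} (ω : Coeff n) (J : Finset (Fin n)) (p : Pt n) :
    P n ω J p = ∑ j ∈ J, sgn n j (J.erase j) *
      ∫ t in (0:ℝ)..1, (t:ℂ) ^ (J.card - 1) *
        pd n j (ω (J.erase j)) (p.2 + t • (p.1 - p.2), p.2) := rfl

/-- Constant integrals against `t ^ k`. -/
lemma integral_tpow_mul_const (k : ℕ) (c : ℂ) :
    ∫ t in (0:ℝ)..1, (t:ℂ) ^ k * c = (((k+1 : ℕ)):ℂ)⁻¹ * c := by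
  rw [intervalIntegral.integral_mul_const]
  have h1 : (fun t : ℝ => ((t:ℂ))^k) = fun t : ℝ => (((t^k : ℝ) : ℂ)) := by
    funext t; push_cast; ring
  rw [h1, intervalIntegral.integral_ofReal, integral_pow]
  rw [one_pow, zero_pow (Nat.succ_ne_zero k), sub_zero]
  push_cast
  rw [mul_comm, mul_one_div, div_eq_inv_mul]

/-- The operator `P` preserves holomorphy. -/
lemma P_differentiableOn {n : ℕ} {U : Set (Fin n → ℂ)} (hUopen : IsOpen U)
    (hUconv : Convex ℝ U) (ω : Coeff n)
    (hω : ∀ J' : Finset (Fin n), DifferentiableOn ℂ (ω J') (U ×ˢ U)) (J : Finset (Fin n)) :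
    DifferentiableOn ℂ (P n ω J) (U ×ˢ U) := by
  unfold P
  apply DifferentiableOn.fun_sum
  intro j _
  exact (P_term_differentiableOn hUopen hUconv (hω (J.erase j)) (J.card - 1) j).const_mul _

/-- Holomorphy of `Abar`. -/
lemma Abar_differentiableOn {n : ℕ} {U : Set (Fin n → ℂ)} (hUopen : IsOpen U)
    (hUconv : Convex ℝ U) {φ : (Fin n → ℂ) → (Fin n → ℂ)} (hφ : DifferentiableOn ℂ φ U) :
    ∀ I J : Finset (Fin n), DifferentiableOn ℂ (Abar n φ I J) (U ×ˢ U) := by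
  intro I
  induction I using Finset.strongInduction with
  | _ I ih =>
    intro J
    rw [Abar]
    by_cases hI : I = ∅
    · rw [if_pos hI]
      show DifferentiableOn ℂ (fun p => if J = ∅ then (1:ℂ) else 0) (U ×ˢ U)
      by_cases hJ : J = ∅
      · simp only [if_pos hJ]; exact differentiableOn_const _
      · simp only [if_neg hJ]; exact differentiableOn_const _
    · rw [if_neg hI]
      have hstuff : ∀ J' : Finset (Fin n), DifferentiableOn ℂ
          (fun p : Pt n => ∑ i ∈ I.attach, sgn n i.1 (I.erase i.1) *
            ((φ p.1 i.1 - φ p.2 i.1) * Abar n φ (I.erase i.1) J' p)) (U ×ˢ U) := by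
        intro J'
        apply DifferentiableOn.fun_sum
        intro i _
        apply DifferentiableOn.const_mul
        apply DifferentiableOn.mul
        · apply DifferentiableOn.sub
          · exact ((differentiableOn_pi.1 hφ) i.1).comp
              (differentiable_fst.differentiableOn) (fun p hp => hp.1)
          · exact ((differentiableOn_pi.1 hφ) i.1).comp
              (differentiable_snd.differentiableOn) (fun p hp => hp.2)
        · exact ih (I.erase i.1) (Finset.erase_ssubset i.2) J'
      exact P_differentiableOn hUopen hUconv _ hstuff J

end Aux

/-- For a holomorphic map `φ : U → ℂⁿ`, the restriction of
`A^{-q}(e^I)` to the diagonal is the `q`-th exterior power of the Jacobian of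
`φ`: its coefficient on `e^J` (`|J| = |I| = q`) is the minor
`det((∂φ^{i_r}/∂z^{j_c})(z))_{r,c}`, and its coefficients on `e^J` with
`|J| ≠ q` vanish. -/
theorem statement6 (n : ℕ) (hn : 1 ≤ n)
    (U : Set (Fin n → ℂ)) (hUopen : IsOpen U) (hUconv : Convex ℝ U)
    (hUne : U.Nonempty)
    (φ : (Fin n → ℂ) → (Fin n → ℂ)) (hφ : DifferentiableOn ℂ φ U) :
    ∀ I : Finset (Fin n), ∀ z ∈ U,
      (∀ (J : Finset (Fin n)) (hJ : J.card = I.card),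
        Abar n φ I J (z, z) =
          Matrix.det (Matrix.of fun r c : Fin I.card =>
            pdU n (J.orderIsoOfFin hJ c) (fun w => φ w (I.orderIsoOfFin rfl r)) z)) ∧
      (∀ J : Finset (Fin n), J.card ≠ I.card → Abar n φ I J (z, z) = 0) := by
  have hW : IsOpen (U ×ˢ U) := hUopen.prod hUopen
  intro I
  induction I using Finset.strongInduction with
  | _ I ih =>
    intro z hz
    have hzz : ((z, z) : Pt n) ∈ U ×ˢ U := ⟨hz, hz⟩
    by_cases hIe : I = ∅
    · subst hIe
      constructor
      · intro J hJ
        have hJ0 : J = ∅ := Finset.card_eq_zero.1 (by simpa using hJ)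
        subst hJ0
        rw [Abar, if_pos rfl]
        haveI : IsEmpty (Fin (∅ : Finset (Fin n)).card) :=
          ⟨fun x => absurd x.2 (by simp)⟩
        rw [Matrix.det_isEmpty]
        show (if (∅ : Finset (Fin n)) = ∅ then (1:ℂ) else 0) = 1
        rw [if_pos rfl]
      · intro J hJne
        rw [Abar, if_pos rfl]
        show (if J = ∅ then (1:ℂ) else 0) = 0
        rw [if_neg]
        intro hJe
        subst hJe
        simp at hJne
    · -- I nonempty
      have hIpos : 0 < I.card := Finset.card_pos.2 (Finset.nonempty_of_ne_empty hIe)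
      obtain ⟨m, hm⟩ : ∃ m, I.card = m + 1 :=
        ⟨I.card - 1, (Nat.succ_pred_eq_of_pos hIpos).symm⟩
      have hφz : DifferentiableAt ℂ φ z := hφ.differentiableAt (hUopen.mem_nhds hz)
      -- derivative of the Koszul sum at the diagonal
      have hpd : ∀ (j : Fin n) (J' : Finset (Fin n)),
          pd n j (fun p : Pt n => ∑ i ∈ I.attach, sgn n i.1 (I.erase i.1) *
            ((φ p.1 i.1 - φ p.2 i.1) * Abar n φ (I.erase i.1) J' p)) (z, z)
          = ∑ i ∈ I, sgn n i (I.erase i) *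
              (pdU n j (fun w => φ w i) z * Abar n φ (I.erase i) J' (z, z)) := by
        intro j J'
        have hterm : ∀ i : {x // x ∈ I}, HasFDerivAt
            (fun p : Pt n => sgn n i.1 (I.erase i.1) *
              ((φ p.1 i.1 - φ p.2 i.1) * Abar n φ (I.erase i.1) J' p))
            (sgn n i.1 (I.erase i.1) • (Abar n φ (I.erase i.1) J' (z, z) •
              ((fderiv ℂ (fun w => φ w i.1) z).comp
                  (ContinuousLinearMap.fst ℂ (Fin n → ℂ) (Fin n → ℂ)) -
                (fderiv ℂ (fun w => φ w i.1) z).comp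
                  (ContinuousLinearMap.snd ℂ (Fin n → ℂ) (Fin n → ℂ))))) (z, z) := by
          intro i
          have hψ : DifferentiableAt ℂ (fun w => φ w i.1) z := (differentiableAt_pi.1 hφz) i.1
          have h1 : HasFDerivAt (fun p : Pt n => φ p.1 i.1)
              ((fderiv ℂ (fun w => φ w i.1) z).comp
                (ContinuousLinearMap.fst ℂ (Fin n → ℂ) (Fin n → ℂ))) (z, z) :=
            (HasFDerivAt.comp (f := (Prod.fst : Pt n → Fin n → ℂ)) (z, z) hψ.hasFDerivAt hasFDerivAt_fst :)
          have h2 : HasFDerivAt (fun p : Pt n => φ p.2 i.1)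
              ((fderiv ℂ (fun w => φ w i.1) z).comp
                (ContinuousLinearMap.snd ℂ (Fin n → ℂ) (Fin n → ℂ))) (z, z) :=
            (HasFDerivAt.comp (f := (Prod.snd : Pt n → Fin n → ℂ)) (z, z) hψ.hasFDerivAt hasFDerivAt_snd :)
          have hg := h1.fun_sub h2
          have hf : HasFDerivAt (Abar n φ (I.erase i.1) J')
              (fderiv ℂ (Abar n φ (I.erase i.1) J') (z, z)) (z, z) :=
            ((Abar_differentiableOn hUopen hUconv hφ (I.erase i.1) J').differentiableAt
              (hW.mem_nhds hzz)).hasFDerivAt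
          have hmul := (hg.fun_mul hf).const_mul (sgn n i.1 (I.erase i.1))
          have hzero : φ ((z,z) : Pt n).1 i.1 - φ ((z,z) : Pt n).2 i.1 = 0 := sub_self _
          simp only [hzero, zero_smul, zero_add] at hmul
          exact hmul.congr_fderiv (ContinuousLinearMap.ext fun v => by simp)
        have hsum : HasFDerivAt (fun p : Pt n => ∑ i ∈ I.attach, sgn n i.1 (I.erase i.1) *
            ((φ p.1 i.1 - φ p.2 i.1) * Abar n φ (I.erase i.1) J' p))
            (∑ i ∈ I.attach, sgn n i.1 (I.erase i.1) • (Abar n φ (I.erase i.1) J' (z, z) •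
              ((fderiv ℂ (fun w => φ w i.1) z).comp
                  (ContinuousLinearMap.fst ℂ (Fin n → ℂ) (Fin n → ℂ)) -
                (fderiv ℂ (fun w => φ w i.1) z).comp
                  (ContinuousLinearMap.snd ℂ (Fin n → ℂ) (Fin n → ℂ))))) (z, z) :=
          HasFDerivAt.fun_sum (fun i _ => hterm i)
        unfold pd
        rw [hsum.fderiv, ContinuousLinearMap.sum_apply,
          ← Finset.sum_attach I (fun i => sgn n i (I.erase i) *
            (pdU n j (fun w => φ w i) z * Abar n φ (I.erase i) J' (z, z)))]
        apply Finset.sum_congr rfl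
        intro i _
        rw [ContinuousLinearMap.smul_apply, ContinuousLinearMap.smul_apply,
          ContinuousLinearMap.sub_apply, ContinuousLinearMap.comp_apply,
          ContinuousLinearMap.comp_apply]
        simp only [ContinuousLinearMap.coe_fst', ContinuousLinearMap.coe_snd', map_zero,
          sub_zero, smul_eq_mul, pdU]
        ring
      -- evaluation of Abar at the diagonal
      have heval : ∀ J : Finset (Fin n), Abar n φ I J (z, z)
          = ∑ j ∈ J, sgn n j (J.erase j) * (((J.card : ℕ) : ℂ)⁻¹ *
              ∑ i ∈ I, sgn n i (I.erase i) *
                (pdU n j (fun w => φ w i) z * Abar n φ (I.erase i) (J.erase j) (z, z))) := by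
        intro J
        rw [Abar, if_neg hIe, P_apply]
        apply Finset.sum_congr rfl
        intro j hj
        have hJpos : 0 < J.card := Finset.card_pos.2 ⟨j, hj⟩
        congr 1
        have hconst : (fun t : ℝ => (t:ℂ) ^ (J.card - 1) *
            pd n j (fun p : Pt n => ∑ i ∈ I.attach, sgn n i.1 (I.erase i.1) *
              ((φ p.1 i.1 - φ p.2 i.1) * Abar n φ (I.erase i.1) (J.erase j) p))
              (((z,z) : Pt n).2 + t • (((z,z) : Pt n).1 - ((z,z) : Pt n).2), ((z,z) : Pt n).2))
            = fun t : ℝ => (t:ℂ) ^ (J.card - 1) *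
            pd n j (fun p : Pt n => ∑ i ∈ I.attach, sgn n i.1 (I.erase i.1) *
              ((φ p.1 i.1 - φ p.2 i.1) * Abar n φ (I.erase i.1) (J.erase j) p)) ((z,z) : Pt n) := by
          funext t
          congr 2
          simp
        have hsucc : J.card - 1 + 1 = J.card := Nat.succ_pred_eq_of_pos hJpos
        rw [hconst, integral_tpow_mul_const, hpd j (J.erase j), hsucc]
      constructor
      · -- the determinant formula
        intro J hJcard
        have hJm : J.card = m + 1 := hJcard.trans hm
        rw [heval J, hJm,
          det_pd_cast (fun i j => pdU n j (fun w => φ w i) z) I J hJcard hm]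
        apply main_det m I J hm hJm
        intro i hi j hj
        have hcard' : (J.erase j).card = (I.erase i).card := by
          rw [Finset.card_erase_of_mem hj, Finset.card_erase_of_mem hi, hJcard]
        have hIm' : (I.erase i).card = m := by
          rw [Finset.card_erase_of_mem hi, hm]
          rfl
        have h1 := (ih (I.erase i) (Finset.erase_ssubset hi) z hz).1 (J.erase j) hcard'
        rw [h1, det_pd_cast (fun i j => pdU n j (fun w => φ w i) z)
          (I.erase i) (J.erase j) hcard' hIm']
      · -- vanishing off the correct degree
        intro J hJcard
        rw [heval J]
        apply Finset.sum_eq_zero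
        intro j hj
        have hJpos : 0 < J.card := Finset.card_pos.2 ⟨j, hj⟩
        have hinner : ∑ i ∈ I, sgn n i (I.erase i) *
            (pdU n j (fun w => φ w i) z * Abar n φ (I.erase i) (J.erase j) (z, z)) = 0 := by
          apply Finset.sum_eq_zero
          intro i hi
          have hcard : (J.erase j).card ≠ (I.erase i).card := by
            rw [Finset.card_erase_of_mem hj, Finset.card_erase_of_mem hi]
            omega
          rw [(ih (I.erase i) (Finset.erase_ssubset hi) z hz).2 (J.erase j) hcard]
          ring
        rw [hinner]
        ring


end TwistedKoszul
end
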